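/- Let h > 0 and let f : ℂ → ℂ be entire with |f(w)| ≤ C·exp(a·|w|) for all w ∈ ℂ, for some constants C, a ≥ 0. Then ∫_ℂ conj(w) · f(w) dγ_h(w) = 2h · f′(0), where γ_h is the Gaussian measure on ℂ whose real and imaginary parts are independent real Gaussians of mean 0 and variance h. -/

import Mathlib

/-!
The density `ρ_h(r) = e^{-r²/2h} / 2πh` of `γ_h` is radial, so in polar coordinates the integral is
`∫₀^∞ r ρ_h(r) ∫₀^{2π} conj(w) f(w) dθ dr` with `w = r e^{iθ}`. On the circle `|w| = r` one has
`conj w = r² / w`, so by the Cauchy formula for `f'(0)` the angular integral is `2π r² f'(0)`, and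
`∫₀^∞ 2π r³ ρ_h(r) dr = 2h`. The exponential growth of `f` makes everything integrable, by
Fernique's theorem.
-/

open MeasureTheory ProbabilityTheory Complex

/-- The Gaussian measure on `ℂ` whose real and imaginary parts are independent
real Gaussians of mean `0` and variance `t`. -/
noncomputable def gaussC (t : ℝ) : Measure ℂ :=
  ((gaussianReal 0 t.toNNReal).prod (gaussianReal 0 t.toNNReal)).map
    (fun p => (p.1 : ℂ) + (p.2 : ℂ) * Complex.I)

open Real Set Metric
open scoped ENNReal NNReal

lemma ProbabilityTheory.IsGaussian.integrable_exp_mul_norm {E : Type*} [NormedAddCommGroup E]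
    [NormedSpace ℝ E] [MeasurableSpace E] [BorelSpace E] [CompleteSpace E]
    [SecondCountableTopology E] (μ : Measure E) [IsGaussian μ] (b : ℝ) :
    Integrable (fun x ↦ rexp (b * ‖x‖)) μ := by
  obtain ⟨C, hC, hint⟩ := IsGaussian.exists_integrable_exp_sq μ
  refine (hint.const_mul (rexp (b ^ 2 / (4 * C)))).mono' (by fun_prop) (ae_of_all _ fun x ↦ ?_)
  rw [Real.norm_of_nonneg (Real.exp_nonneg _), ← Real.exp_add, Real.exp_le_exp,
    div_add' _ _ _ (by positivity), le_div_iff₀ (by positivity)]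
  nlinarith [sq_nonneg (2 * C * ‖x‖ - b)]

instance isGaussian_gaussC (h : ℝ) : IsGaussian (gaussC h) := by
  have : (fun p : ℝ × ℝ ↦ (p.1 : ℂ) + (p.2 : ℂ) * I) = equivRealProdCLM.symm := by
    ext p; simp [equivRealProdCLM_symm_apply]
  rw [gaussC, this]
  infer_instance

lemma integrable_conj_mul_of_norm_le_mul_exp (μ : Measure ℂ) [IsGaussian μ] {f : ℂ → ℂ}
    (hf : Continuous f) {C a : ℝ} (hgrowth : ∀ w, ‖f w‖ ≤ C * rexp (a * ‖w‖)) :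
    Integrable (fun w ↦ starRingEnd ℂ w * f w) μ := by
  refine ((IsGaussian.integrable_exp_mul_norm μ (a + 1)).const_mul C).mono'
    (continuous_conj.mul hf).aestronglyMeasurable (ae_of_all _ fun w ↦ ?_)
  calc ‖starRingEnd ℂ w * f w‖ = ‖w‖ * ‖f w‖ := by rw [norm_mul, Complex.norm_conj]
    _ ≤ rexp ‖w‖ * (C * rexp (a * ‖w‖)) :=
      mul_le_mul ((le_add_of_nonneg_right zero_le_one).trans (add_one_le_exp _)) (hgrowth w)
        (norm_nonneg _) (Real.exp_nonneg _)
    _ = C * rexp ((a + 1) * ‖w‖) := by rw [add_one_mul, Real.exp_add]; ring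

lemma MeasureTheory.MeasurePreserving.map_withDensity_comp {α β : Type*} [MeasurableSpace α]
    [MeasurableSpace β] {μ : Measure α} {ν : Measure β} {e : α → β}
    (he : MeasurePreserving e μ ν) (hee : MeasurableEmbedding e) (ρ : β → ℝ≥0∞) :
    (μ.withDensity (ρ ∘ e)).map e = ν.withDensity ρ := by
  ext s hs
  rw [Measure.map_apply hee.measurable hs, withDensity_apply _ (hee.measurable hs),
    withDensity_apply _ hs, ← he.setLIntegral_comp_preimage_emb hee]
  rfl

lemma ProbabilityTheory.gaussianPDFReal_mul_gaussianPDFReal (v : ℝ≥0) (x y : ℝ) :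
    gaussianPDFReal 0 v x * gaussianPDFReal 0 v y
      = (2 * π * v)⁻¹ * rexp (-(x ^ 2 + y ^ 2) / (2 * v)) := by
  simp only [gaussianPDFReal, sub_zero]
  rw [mul_mul_mul_comm, ← mul_inv, Real.mul_self_sqrt (by positivity), ← Real.exp_add]
  ring_nf

noncomputable def gaussCPDF (t : ℝ) (z : ℂ) : ℝ := (2 * π * t)⁻¹ * rexp (-‖z‖ ^ 2 / (2 * t))

lemma gaussCPDF_nonneg {t : ℝ} (ht : 0 ≤ t) (z : ℂ) : 0 ≤ gaussCPDF t z := by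
  unfold gaussCPDF; positivity

lemma gaussC_eq_withDensity {h : ℝ} (hh : 0 < h) :
    gaussC h = volume.withDensity (fun z ↦ ENNReal.ofReal (gaussCPDF h z)) := by
  have hv : h.toNNReal ≠ 0 := by simpa using hh
  have he : (fun p : ℝ × ℝ ↦ (p.1 : ℂ) + (p.2 : ℂ) * I) = measurableEquivRealProd.symm := by
    funext p
    apply Complex.ext <;> simp [measurableEquivRealProd_symm_apply]
  rw [gaussC, gaussianReal_of_var_ne_zero _ hv, prod_withDensity (measurable_gaussianPDF _ _)
    (measurable_gaussianPDF _ _), ← Measure.volume_eq_prod, he,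
    ← volume_preserving_equiv_real_prod.symm.map_withDensity_comp
      measurableEquivRealProd.symm.measurableEmbedding]
  congr 2 with p
  simp only [gaussianPDF, Function.comp_apply, gaussCPDF,
    ← ENNReal.ofReal_mul (gaussianPDFReal_nonneg _ _ _), gaussianPDFReal_mul_gaussianPDFReal,
    measurableEquivRealProd_symm_apply, Real.coe_toNNReal _ hh.le]
  rw [Complex.sq_norm, Complex.normSq_mk, sq, sq]

section

variable {E : Type*} [NormedAddCommGroup E] [NormedSpace ℝ E]

lemma integral_gaussC {h : ℝ} (hh : 0 < h) (g : ℂ → E) :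
    ∫ z, g z ∂gaussC h = ∫ z, gaussCPDF h z • g z := by
  rw [gaussC_eq_withDensity hh, integral_withDensity_eq_integral_toReal_smul
    (by unfold gaussCPDF; fun_prop) (ae_of_all _ fun _ ↦ ENNReal.ofReal_lt_top)]
  simp_rw [ENNReal.toReal_ofReal (gaussCPDF_nonneg hh.le _)]

lemma integrable_gaussC_iff {h : ℝ} (hh : 0 < h) {g : ℂ → E} :
    Integrable g (gaussC h) ↔ Integrable (fun z ↦ gaussCPDF h z • g z) := by
  rw [gaussC_eq_withDensity hh, integrable_withDensity_iff_integrable_smul'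
    (by unfold gaussCPDF; fun_prop) (ae_of_all _ fun _ ↦ ENNReal.ofReal_lt_top)]
  simp_rw [ENNReal.toReal_ofReal (gaussCPDF_nonneg hh.le _)]

lemma Complex.polarCoord_symm_eq_circleMap (r θ : ℝ) :
    Complex.polarCoord.symm (r, θ) = circleMap 0 r θ := by
  simp [circleMap, Complex.exp_mul_I, mul_add]

lemma Complex.integrableOn_polarCoord_target {g : ℂ → E} (hg : Integrable g) :
    IntegrableOn (fun p : ℝ × ℝ ↦ p.1 • g (Complex.polarCoord.symm p)) polarCoord.target := by
  have hg' : IntegrableOn (g ∘ measurableEquivRealProd.symm)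
      (polarCoord.symm '' polarCoord.target) :=
    ((volume_preserving_equiv_real_prod.symm.integrable_comp_emb
      measurableEquivRealProd.symm.measurableEmbedding).2 hg).integrableOn
  rw [integrableOn_image_iff_integrableOn_abs_det_fderiv_smul volume
    polarCoord.open_target.measurableSet
    (fun p _ ↦ (hasFDerivAt_polarCoord_symm p).hasFDerivWithinAt) polarCoord.symm.injOn] at hg'
  refine hg'.congr_fun (fun p hp ↦ ?_) polarCoord.open_target.measurableSet
  simp only [det_fderivPolarCoordSymm, abs_of_pos (show 0 < p.1 from hp.1), Function.comp_apply,
    measurableEquivRealProd_symm_polarCoord_symm_apply]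

lemma Complex.integral_eq_integral_Ioi_integral_circleMap {g : ℂ → E} (hg : Integrable g) :
    ∫ z, g z = ∫ r in Ioi 0, r • ∫ θ in 0..2 * π, g (circleMap 0 r θ) := by
  rw [← Complex.integral_comp_polarCoord_symm, polarCoord_target, Measure.volume_eq_prod,
    setIntegral_prod _ (Complex.integrableOn_polarCoord_target hg)]
  refine setIntegral_congr_fun measurableSet_Ioi fun r _ ↦ ?_
  have hper : Function.Periodic (fun θ ↦ g (circleMap 0 r θ)) (2 * π) := fun θ ↦ by
    simp only [periodic_circleMap 0 r θ]
  rw [integral_smul, ← integral_Ioc_eq_integral_Ioo,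
    ← intervalIntegral.integral_of_le (by linarith [pi_pos]), ← zero_add (2 * π),
    ← hper.intervalIntegral_add_eq (-π) 0]
  simp only [show -π + 2 * π = π by ring, Complex.polarCoord_symm_eq_circleMap]

end

lemma DiffContOnCl.integral_conj_sub_center_mul_circleMap {f : ℂ → ℂ} {c : ℂ} {r : ℝ}
    (hr : 0 < r) (hf : DiffContOnCl ℂ f (ball c r)) :
    ∫ θ in 0..2 * π, starRingEnd ℂ (circleMap c r θ - c) * f (circleMap c r θ)
      = 2 * π * r ^ 2 * deriv f c := by
  -- `conj (z - c) = r² / (z - c)` on the circle, and `dz = i (z - c) dθ`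
  have hpt (θ : ℝ) : starRingEnd ℂ (circleMap c r θ - c) * f (circleMap c r θ)
      = (-r ^ 2 * I) * (deriv (circleMap c r) θ
        • ((1 / (circleMap c r θ - c) ^ 2) • f (circleMap c r θ))) := by
    have hw : circleMap c r θ - c ≠ 0 := sub_ne_zero.2 (circleMap_ne_center hr.ne')
    have hconj : starRingEnd ℂ (circleMap c r θ - c) = r ^ 2 / (circleMap c r θ - c) := by
      rw [eq_div_iff hw, Complex.conj_mul', circleMap_sub_center, norm_circleMap_zero,
        abs_of_pos hr]
    rw [hconj, deriv_circleMap, ← circleMap_sub_center c r θ, smul_eq_mul, smul_eq_mul]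
    generalize circleMap c r θ - c = w at hw ⊢
    field_simp
    linear_combination ((r : ℂ) ^ 2 * f (circleMap c r θ)) * I_sq
  have hcauchy := hf.deriv_eq_smul_circleIntegral hr
  rw [circleIntegral] at hcauchy
  rw [intervalIntegral.integral_congr fun θ _ ↦ hpt θ, intervalIntegral.integral_const_mul,
    hcauchy, smul_eq_mul]
  linear_combination (-2 * π * r ^ 2 * deriv f c) * I_sq

lemma integral_Ioi_pow_three_mul_exp_neg_mul_sq {b : ℝ} (hb : 0 < b) :
    ∫ r in Ioi 0, r ^ 3 * rexp (-b * r ^ 2) = (2 * b ^ 2)⁻¹ := by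
  have h := integral_rpow_mul_exp_neg_mul_rpow (p := 2) (q := 3) two_pos (by norm_num) hb
  norm_num [Gamma_two] at h
  simp_rw [neg_mul, h]
  ring

theorem gaussian_conj_moment_holomorphic_general
    (h : ℝ) (hh : 0 < h) (f : ℂ → ℂ) (hf : ∀ z, AnalyticAt ℂ f z)
    (C a : ℝ)
    (hgrowth : ∀ w, ‖f w‖ ≤ C * Real.exp (a * ‖w‖)) :
    ∫ w, (starRingEnd ℂ) w * f w ∂(gaussC h) = 2 * (h : ℂ) * deriv f 0 := by
  have hfd : Differentiable ℂ f := fun z ↦ (hf z).differentiableAt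
  have hint := (integrable_gaussC_iff hh).1
    (integrable_conj_mul_of_norm_le_mul_exp _ hfd.continuous hgrowth)
  have hangular (r : ℝ) (hr : r ∈ Ioi 0) :
      r • ∫ θ in 0..2 * π,
          gaussCPDF h (circleMap 0 r θ) • (starRingEnd ℂ (circleMap 0 r θ) * f (circleMap 0 r θ))
        = (r ^ 3 * rexp (-(2 * h)⁻¹ * r ^ 2)) • (h⁻¹ • deriv f 0) := by
    have hcircle := hfd.diffContOnCl.integral_conj_sub_center_mul_circleMap (c := 0) hr
    simp only [sub_zero] at hcircle
    simp only [gaussCPDF, norm_circleMap_zero, abs_of_pos (show 0 < r from hr),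
      intervalIntegral.integral_smul, hcircle]
    simp only [Complex.real_smul]
    push_cast
    field_simp
  rw [integral_gaussC hh, Complex.integral_eq_integral_Ioi_integral_circleMap hint,
    setIntegral_congr_fun measurableSet_Ioi hangular, integral_smul_const,
    integral_Ioi_pow_three_mul_exp_neg_mul_sq (by positivity), Complex.real_smul,
    Complex.real_smul]
  push_cast
  field_simp

/-- First-moment identity against holomorphic functions:
for `f : ℂ → ℂ` entire of exponential growth,
`∫ conj(w)·f(w) dγ_h(w) = 2h·f′(0)`. -/
theorem gaussian_conj_moment_holomorphic
    (h : ℝ) (hh : 0 < h) (f : ℂ → ℂ) (hf : ∀ z, AnalyticAt ℂ f z)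
    (C a : ℝ) (hC : 0 ≤ C) (ha : 0 ≤ a)
    (hgrowth : ∀ w, ‖f w‖ ≤ C * Real.exp (a * ‖w‖)) :
    ∫ w, (starRingEnd ℂ) w * f w ∂(gaussC h) = 2 * (h : ℂ) * deriv f 0 :=
  gaussian_conj_moment_holomorphic_general h hh f hf C a hgrowth
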